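/- Let {(Zᵢ,Xᵢ)}_{i=1}^n be i.i.d. with joint pmf p_{ZX} on a product of finite alphabets 𝒵 × 𝒳, let ε, ε' > 0 and b₁ > b₀ > 0, suppose ℙ[ f(Xⁿ) > ε' or f(Zⁿ,Xⁿ) > ε' ] ≤ 2^{−n b₁ ε}, and let Θ ≜ 𝟙{ (Zⁿ,Xⁿ) ∈ 𝒜_{ε,ε'}^{(n)}(Z,X) and Zⁿ ∈ ℬ_{ε,ε'}^{(n)}(Z,X) }. Then ℙ[Θ = 1] ≥ 1 − ( e^{n C_Z^{(1)}(ε)} + e^{n C_Z^{(2)}(ε)} + 2^{−n b₁ ε} + 2^{−n (b₁ − b₀) ε} ). -/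

import Mathlib

open Finset Real
open scoped Classical BigOperators

/-- Shannon entropy (in bits) of a pmf on a finite alphabet, with the convention `0 log 0 = 0`. -/
noncomputable def shannonEntropy {W : Type*} [Fintype W] (q : W → ℝ) : ℝ :=
  - ∑ w, q w * Real.logb 2 (q w)

/-- Probability of an i.i.d. sequence: `p(wⁿ) = ∏ᵢ p(wᵢ)`. -/
noncomputable def seqProb {W : Type*} (q : W → ℝ) {n : ℕ} (w : Fin n → W) : ℝ :=
  ∏ i, q (w i)

/-- The deviation `f(wⁿ) = |−(1/n) log₂ p(wⁿ) − H(W)|` of the empirical entropy. -/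
noncomputable def fdev {W : Type*} [Fintype W] (q : W → ℝ) {n : ℕ} (w : Fin n → W) : ℝ :=
  |(-(1 / (n : ℝ))) * Real.logb 2 (seqProb q w) - shannonEntropy q|

/-- Chernoff exponent `C_W^{(1)}(ε) = inf_{s>0} ( ln 𝔼[q(W)^{−s/ln 2}] − s(H(W)+ε) )`. -/
noncomputable def chernoff1 {W : Type*} [Fintype W] (q : W → ℝ) (ε : ℝ) : ℝ :=
  sInf ((fun s : ℝ =>
    Real.log (∑ w ∈ Finset.univ.filter (fun w => 0 < q w), q w ^ (1 - s / Real.log 2))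
      - s * (shannonEntropy q + ε)) '' Set.Ioi 0)

/-- Chernoff exponent `C_W^{(2)}(ε) = inf_{s>0} ( ln 𝔼[q(W)^{s/ln 2}] − s(−H(W)+ε) )`. -/
noncomputable def chernoff2 {W : Type*} [Fintype W] (q : W → ℝ) (ε : ℝ) : ℝ :=
  sInf ((fun s : ℝ =>
    Real.log (∑ w ∈ Finset.univ.filter (fun w => 0 < q w), q w ^ (1 + s / Real.log 2))
      - s * (-shannonEntropy q + ε)) '' Set.Ioi 0)

/-- Marginal on the first component of a joint pmf. -/
noncomputable def margFst {X Y : Type*} [Fintype Y] (p : X × Y → ℝ) (x : X) : ℝ :=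
  ∑ y, p (x, y)

/-- Marginal on the second component of a joint pmf. -/
noncomputable def margSnd {X Y : Type*} [Fintype X] (p : X × Y → ℝ) (y : Y) : ℝ :=
  ∑ x, p (x, y)

/-- The sequence of pairs associated to a pair of sequences. -/
def pairSeq {X Y : Type*} {n : ℕ} (w : (Fin n → X) × (Fin n → Y)) : Fin n → X × Y :=
  fun i => (w.1 i, w.2 i)

/-- Joint probability `p(xⁿ,yⁿ) = ∏ᵢ p(xᵢ,yᵢ)` of a pair of i.i.d. sequences. -/
noncomputable def jointSeqProb {X Y : Type*} (p : X × Y → ℝ) {n : ℕ}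
    (w : (Fin n → X) × (Fin n → Y)) : ℝ :=
  ∏ i, p (w.1 i, w.2 i)

/-- The typical set `𝒜_{ε,ε'}^{(n)}(X,Y)`: `f(xⁿ) ≤ ε`, `f(yⁿ) ≤ ε'`, `f(xⁿ,yⁿ) ≤ ε'`. -/
def typical {X Y : Type*} [Fintype X] [Fintype Y] (p : X × Y → ℝ)
    (ε ε' : ℝ) {n : ℕ} (w : (Fin n → X) × (Fin n → Y)) : Prop :=
  fdev (margFst p) w.1 ≤ ε ∧ fdev (margSnd p) w.2 ≤ ε' ∧ fdev p (pairSeq w) ≤ ε'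

/-- Conditional probability `ℙ[ (Xⁿ,Yⁿ) ∉ 𝒜_{ε,ε'}^{(n)}(X,Y) | Xⁿ = xⁿ ]`
(for `xⁿ` with `p(xⁿ) > 0`). -/
noncomputable def condNotTyp {X Y : Type*} [Fintype X] [Fintype Y] (p : X × Y → ℝ)
    (ε ε' : ℝ) {n : ℕ} (xn : Fin n → X) : ℝ :=
  (∑ yn ∈ Finset.univ.filter (fun yn : Fin n → Y => ¬ typical p ε ε' (xn, yn)),
      jointSeqProb p (xn, yn)) / seqProb (margFst p) xn

/-!
`Θ = 0` forces one of three events: `f(Zⁿ) > ε`; `f(Xⁿ) > ε'` or `f(Zⁿ,Xⁿ) > ε'`; or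
`f(Zⁿ) ≤ ε` and `Zⁿ ∉ ℬ`. The first has probability at most `e^{n C⁽¹⁾} + e^{n C⁽²⁾}` by
Chernoff's bound for both tails of `-log₂ p(Zⁿ)`, whose exponential moments factorise over the
i.i.d. coordinates; the second is the hypothesis. For the third, Markov's inequality gives
`ℙ[Zⁿ ∉ ℬ, f(Zⁿ) ≤ ε] ≤ 2^{n b₀ ε} ℙ[f(Xⁿ) > ε' or f(Zⁿ,Xⁿ) > ε'] ≤ 2^{-n (b₁ - b₀) ε}`.
-/

section SumFilter

variable {ι : Type*} [Fintype ι] {f : ι → ℝ}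

lemma sum_filter_le_sum_filter_add_sum_filter (hf : ∀ i, 0 ≤ f i)
    {c c₁ c₂ : ι → Prop} [DecidablePred c] [DecidablePred c₁] [DecidablePred c₂]
    (h : ∀ i, c i → c₁ i ∨ c₂ i) :
    ∑ i ∈ univ.filter c, f i ≤ ∑ i ∈ univ.filter c₁, f i + ∑ i ∈ univ.filter c₂, f i := by
  simp only [sum_filter, ← sum_add_distrib]
  refine sum_le_sum fun i _ => ?_
  have := hf i
  by_cases hc : c i
  · rcases h i hc with h₁ | h₂ <;> split_ifs <;> linarith
  · split_ifs <;> linarith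

end SumFilter

section IIDSequence

variable {W : Type*} {q : W → ℝ} {n : ℕ}

lemma seqProb_nonneg (hq : ∀ w, 0 ≤ q w) (zn : Fin n → W) : 0 ≤ seqProb q zn :=
  prod_nonneg fun i _ => hq (zn i)

variable [Fintype W]

lemma sum_seqProb (hq₁ : ∑ w, q w = 1) : ∑ zn : Fin n → W, seqProb q zn = 1 := by
  simp only [seqProb, ← Fintype.sum_pow, hq₁, one_pow]

lemma sum_filter_seqProb_le_one (hq : ∀ w, 0 ≤ q w) (hq₁ : ∑ w, q w = 1)
    (c : (Fin n → W) → Prop) [DecidablePred c] :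
    ∑ zn ∈ univ.filter c, seqProb q zn ≤ 1 :=
  (sum_le_sum_of_subset_of_nonneg (filter_subset _ _) fun zn _ _ =>
    seqProb_nonneg hq zn).trans_eq (sum_seqProb hq₁)

/-- Chernoff's argument: the hypothesis gives `p(wⁿ) ≤ exp (-n s a) p(wⁿ)^r` on `S`, and
`∑ p(wⁿ)^r` over sequences of positive probability is the `n`-th power of the one-letter sum. -/
lemma sum_seqProb_le_exp_moment (hq : ∀ w, 0 ≤ q w) (hq₁ : ∑ w, q w = 1)
    {S : Finset (Fin n → W)} {r s a : ℝ}
    (hS : ∀ zn ∈ S, 0 < seqProb q zn → 1 ≤ exp (-(n * (s * a))) * seqProb q zn ^ (r - 1)) :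
    ∑ zn ∈ S, seqProb q zn
      ≤ exp (n * (log (∑ w ∈ univ.filter (fun w => 0 < q w), q w ^ r) - s * a)) := by
  set g : W → ℝ := fun w => if 0 < q w then q w ^ r else 0
  set M := ∑ w ∈ univ.filter (fun w => 0 < q w), q w ^ r
  have hg : ∀ w, 0 ≤ g w := fun w => by
    simp only [g]; split_ifs with h
    exacts [rpow_nonneg h.le r, le_rfl]
  have hMg : M = ∑ w, g w := sum_filter _ _
  have hM : 0 < M := by
    obtain ⟨w, -, hw⟩ := exists_lt_of_sum_lt (s := univ) (f := fun _ => (0 : ℝ)) (g := q)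
      (by simp [hq₁])
    exact sum_pos (fun w hw => rpow_pos_of_pos (mem_filter.mp hw).2 r) ⟨w, by simpa using hw⟩
  have hterm : ∀ zn ∈ S, seqProb q zn ≤ exp (-(n * (s * a))) * ∏ i, g (zn i) := by
    intro zn hzn
    rcases (seqProb_nonneg hq zn).eq_or_lt with h0 | hpos
    · rw [← h0]; exact mul_nonneg (exp_nonneg _) (prod_nonneg fun _ _ => hg _)
    have hall : ∀ i, 0 < q (zn i) := fun i => by
      by_contra! h
      exact hpos.ne' (prod_eq_zero (mem_univ i) (le_antisymm h (hq _)))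
    have hprod : ∏ i, g (zn i) = seqProb q zn * seqProb q zn ^ (r - 1) := by
      calc ∏ i, g (zn i) = ∏ i, q (zn i) ^ r := prod_congr rfl fun i _ => if_pos (hall i)
        _ = seqProb q zn ^ (1 + (r - 1)) := by
          rw [finsetProd_rpow _ _ fun _ _ => hq _, add_sub_cancel]; rfl
        _ = seqProb q zn * seqProb q zn ^ (r - 1) := by rw [rpow_add hpos, rpow_one]
    rw [hprod, mul_left_comm]
    exact le_mul_of_one_le_right hpos.le (hS zn hzn hpos)
  calc ∑ zn ∈ S, seqProb q zn
      ≤ ∑ zn : Fin n → W, exp (-(n * (s * a))) * ∏ i, g (zn i) :=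
        (sum_le_sum hterm).trans <| sum_le_sum_of_subset_of_nonneg (subset_univ _)
          fun _ _ _ => mul_nonneg (exp_nonneg _) (prod_nonneg fun _ _ => hg _)
    _ = exp (-(n * (s * a))) * M ^ n := by rw [← mul_sum, hMg, Fintype.sum_pow]
    _ = exp (n * (log M - s * a)) := by
        rw [← exp_log (pow_pos hM n), ← exp_add, log_pow]; ring_nf

lemma one_le_exp_neg_mul_rpow_div_log_two {P x y : ℝ} (hP : 0 < P)
    (h : x ≤ y * logb 2 P) : 1 ≤ exp (-x) * P ^ (y / log 2) := by
  unfold Real.logb at h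
  rw [rpow_def_of_pos hP, ← exp_add, one_le_exp_iff]
  have : log P * (y / log 2) = y * (log P / log 2) := by ring
  linarith

lemma sum_upperTail_le (hq : ∀ w, 0 ≤ q w) (hq₁ : ∑ w, q w = 1) (hn : 0 < n) (ε : ℝ)
    {s : ℝ} (hs : 0 < s) :
    ∑ zn ∈ univ.filter (fun zn : Fin n → W =>
        ε < (-(1 / (n : ℝ))) * logb 2 (seqProb q zn) - shannonEntropy q), seqProb q zn
      ≤ exp (n * (log (∑ w ∈ univ.filter (fun w => 0 < q w), q w ^ (1 - s / log 2))
          - s * (shannonEntropy q + ε))) := by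
  refine sum_seqProb_le_exp_moment hq hq₁ fun zn hzn hpos => ?_
  rw [show 1 - s / log 2 - 1 = -s / log 2 by ring]
  refine one_le_exp_neg_mul_rpow_div_log_two hpos ?_
  have hn' : (0 : ℝ) < n := Nat.cast_pos.mpr hn
  have h := mul_lt_mul_of_pos_left (mem_filter.mp hzn).2 hn'
  have hcancel : (n : ℝ) * (-(1 / (n : ℝ)) * logb 2 (seqProb q zn) - shannonEntropy q)
      = -logb 2 (seqProb q zn) - n * shannonEntropy q := by field_simp
  nlinarith

lemma sum_lowerTail_le (hq : ∀ w, 0 ≤ q w) (hq₁ : ∑ w, q w = 1) (hn : 0 < n) (ε : ℝ)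
    {s : ℝ} (hs : 0 < s) :
    ∑ zn ∈ univ.filter (fun zn : Fin n → W =>
        ε < -((-(1 / (n : ℝ))) * logb 2 (seqProb q zn) - shannonEntropy q)), seqProb q zn
      ≤ exp (n * (log (∑ w ∈ univ.filter (fun w => 0 < q w), q w ^ (1 + s / log 2))
          - s * (-shannonEntropy q + ε))) := by
  refine sum_seqProb_le_exp_moment hq hq₁ fun zn hzn hpos => ?_
  rw [add_sub_cancel_left]
  refine one_le_exp_neg_mul_rpow_div_log_two hpos ?_
  have hn' : (0 : ℝ) < n := Nat.cast_pos.mpr hn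
  have h := mul_lt_mul_of_pos_left (mem_filter.mp hzn).2 hn'
  have hcancel : (n : ℝ) * -(-(1 / (n : ℝ)) * logb 2 (seqProb q zn) - shannonEntropy q)
      = logb 2 (seqProb q zn) + n * shannonEntropy q := by field_simp; ring
  nlinarith

lemma le_exp_mul_sInf {S : Set ℝ} {P x : ℝ} (hx : 0 ≤ x) (hS : S.Nonempty) (hP : P ≤ 1)
    (h : ∀ y ∈ S, P ≤ exp (x * y)) : P ≤ exp (x * sInf S) := by
  by_cases hbdd : BddBelow S
  · have hmono : Monotone fun y => exp (x * y) := fun _ _ hy =>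
      exp_le_exp.mpr (mul_le_mul_of_nonneg_left hy hx)
    rw [hmono.map_csInf_of_continuousAt (by fun_prop) hS hbdd]
    exact le_csInf (hS.image _) (by simpa using h)
  · rwa [sInf_of_not_bddBelow hbdd, mul_zero, exp_zero]

lemma sum_fdev_gt_le (hq : ∀ w, 0 ≤ q w) (hq₁ : ∑ w, q w = 1) (ε : ℝ) :
    ∑ zn ∈ univ.filter (fun zn : Fin n → W => ε < fdev q zn), seqProb q zn
      ≤ exp (n * chernoff1 q ε) + exp (n * chernoff2 q ε) := by
  rcases n.eq_zero_or_pos with rfl | hn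
  · simp only [Nat.cast_zero, zero_mul, exp_zero]
    linarith [sum_filter_seqProb_le_one hq hq₁ fun zn : Fin 0 → W => ε < fdev q zn]
  refine (sum_filter_le_sum_filter_add_sum_filter (seqProb_nonneg hq)
    fun zn h => lt_abs.mp h).trans (add_le_add ?_ ?_)
  all_goals
    refine le_exp_mul_sInf (Nat.cast_nonneg n) ((Set.nonempty_Ioi).image _)
      (sum_filter_seqProb_le_one hq hq₁ _) ?_
    rintro _ ⟨s, hs, rfl⟩
  exacts [sum_upperTail_le hq hq₁ hn ε hs, sum_lowerTail_le hq hq₁ hn ε hs]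

end IIDSequence

section JointSequence

variable {Z X : Type*} {p : Z × X → ℝ} {n : ℕ}

lemma jointSeqProb_nonneg (hp : ∀ zx, 0 ≤ p zx) (w : (Fin n → Z) × (Fin n → X)) :
    0 ≤ jointSeqProb p w :=
  prod_nonneg fun _ _ => hp _

variable [Fintype X]

lemma margFst_nonneg (hp : ∀ zx, 0 ≤ p zx) (z : Z) : 0 ≤ margFst p z :=
  sum_nonneg fun x _ => hp (z, x)

lemma sum_jointSeqProb_snd (zn : Fin n → Z) :
    ∑ xn : Fin n → X, jointSeqProb p (zn, xn) = seqProb (margFst p) zn := by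
  simp only [jointSeqProb, seqProb, margFst, Fintype.prod_sum]

variable [Fintype Z]

lemma sum_margFst (hsum : ∑ zx, p zx = 1) : ∑ z, margFst p z = 1 := by
  rw [← hsum, Fintype.sum_prod_type]; rfl

lemma sum_jointSeqProb (hsum : ∑ zx, p zx = 1) :
    ∑ w : (Fin n → Z) × (Fin n → X), jointSeqProb p w = 1 := by
  rw [Fintype.sum_prod_type]
  simp only [sum_jointSeqProb_snd]
  exact sum_seqProb (sum_margFst hsum)

lemma sum_filter_fst_jointSeqProb (c : (Fin n → Z) → Prop) [DecidablePred c] :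
    ∑ w ∈ univ.filter (fun w : (Fin n → Z) × (Fin n → X) => c w.1), jointSeqProb p w
      = ∑ zn ∈ univ.filter c, seqProb (margFst p) zn := by
  rw [sum_filter, sum_filter, Fintype.sum_prod_type]
  refine sum_congr rfl fun zn _ => ?_
  split_ifs
  exacts [sum_jointSeqProb_snd zn, sum_const_zero]

variable {ε ε' r : ℝ}

lemma seqProb_margFst_le_of_lt_condNotTyp (hp : ∀ zx, 0 ≤ p zx) (hr : 0 < r)
    {zn : Fin n → Z} (h : r < condNotTyp p ε ε' zn) :
    seqProb (margFst p) zn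
      ≤ r⁻¹ * ∑ xn ∈ univ.filter (fun xn : Fin n → X => ¬ typical p ε ε' (zn, xn)),
          jointSeqProb p (zn, xn) := by
  rw [le_inv_mul_iff₀ hr]
  rcases (seqProb_nonneg (margFst_nonneg hp) zn).eq_or_lt with h0 | hpos
  · rw [← h0, mul_zero]
    exact sum_nonneg fun _ _ => jointSeqProb_nonneg hp _
  · exact ((lt_div_iff₀ hpos).mp h).le

/-- Markov's inequality for the conditional probability of atypicality: once `f(zⁿ) ≤ ε`,
`(zⁿ, xⁿ)` can only be atypical through the conditions on `xⁿ` and on the pair. -/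
lemma sum_fdev_le_condNotTyp_gt_le (hp : ∀ zx, 0 ≤ p zx) (hr : 0 < r) :
    ∑ zn ∈ univ.filter (fun zn : Fin n → Z =>
        fdev (margFst p) zn ≤ ε ∧ r < condNotTyp p ε ε' zn), seqProb (margFst p) zn
      ≤ r⁻¹ * ∑ w ∈ univ.filter (fun w : (Fin n → Z) × (Fin n → X) =>
          fdev (margSnd p) w.2 > ε' ∨ fdev p (pairSeq w) > ε'), jointSeqProb p w := by
  have hsub : ∀ zn, fdev (margFst p) zn ≤ ε →
      univ.filter (fun xn : Fin n → X => ¬ typical p ε ε' (zn, xn))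
        ⊆ univ.filter (fun xn => fdev (margSnd p) xn > ε' ∨ fdev p (pairSeq (zn, xn)) > ε') := by
    intro zn hzn xn
    simp only [mem_filter, mem_univ, true_and, typical, not_and_or, not_le]
    rintro (h | h | h)
    exacts [absurd h hzn.not_gt, Or.inl h, Or.inr h]
  calc _ ≤ ∑ zn : Fin n → Z, r⁻¹ * ∑ xn ∈ univ.filter (fun xn : Fin n → X =>
          fdev (margSnd p) xn > ε' ∨ fdev p (pairSeq (zn, xn)) > ε'), jointSeqProb p (zn, xn) := by
        refine (sum_le_sum fun zn hzn => ?_).trans (sum_le_sum_of_subset_of_nonneg (subset_univ _)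
          fun _ _ _ => mul_nonneg (inv_nonneg.mpr hr.le)
            (sum_nonneg fun _ _ => jointSeqProb_nonneg hp _))
        obtain ⟨hfdev, hcond⟩ := (mem_filter.mp hzn).2
        exact (seqProb_margFst_le_of_lt_condNotTyp hp hr hcond).trans <|
          mul_le_mul_of_nonneg_left (sum_le_sum_of_subset_of_nonneg (hsub zn hfdev)
            fun _ _ _ => jointSeqProb_nonneg hp _) (inv_nonneg.mpr hr.le)
    _ = _ := by rw [← mul_sum, sum_filter, Fintype.sum_prod_type]; simp only [sum_filter]

lemma sum_not_theta_le (hp : ∀ zx, 0 ≤ p zx) :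
    ∑ w ∈ univ.filter (fun w : (Fin n → Z) × (Fin n → X) =>
        ¬ (typical p ε ε' w ∧ condNotTyp p ε ε' w.1 ≤ r)), jointSeqProb p w
      ≤ ∑ zn ∈ univ.filter (fun zn : Fin n → Z => ε < fdev (margFst p) zn),
          seqProb (margFst p) zn
        + (∑ w ∈ univ.filter (fun w : (Fin n → Z) × (Fin n → X) =>
            fdev (margSnd p) w.2 > ε' ∨ fdev p (pairSeq w) > ε'), jointSeqProb p w
          + ∑ zn ∈ univ.filter (fun zn : Fin n → Z =>
              fdev (margFst p) zn ≤ ε ∧ r < condNotTyp p ε ε' zn), seqProb (margFst p) zn) := by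
  rw [← sum_filter_fst_jointSeqProb, ← sum_filter_fst_jointSeqProb]
  refine (sum_filter_le_sum_filter_add_sum_filter (jointSeqProb_nonneg hp) fun w h => ?_).trans
    (add_le_add le_rfl (sum_filter_le_sum_filter_add_sum_filter (jointSeqProb_nonneg hp)
      fun _ => id))
  simp only [typical, not_and_or, not_le] at h
  rcases lt_or_ge ε (fdev (margFst p) w.1) with h₁ | h₁ <;> tauto

end JointSequence

theorem prob_theta_one_bound_general
    {Z X : Type*} [Fintype Z] [Fintype X] (p : Z × X → ℝ)
    (hp : ∀ zx, 0 ≤ p zx) (hsum : ∑ zx, p zx = 1)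
    (n : ℕ) (ε ε' b₀ b₁ : ℝ)
    (hhyp : ∑ w ∈ Finset.univ.filter (fun w : (Fin n → Z) × (Fin n → X) =>
          fdev (margSnd p) w.2 > ε' ∨ fdev p (pairSeq w) > ε'),
        jointSeqProb p w ≤ (2 : ℝ) ^ (-((n : ℝ) * b₁ * ε))) :
    ∑ w ∈ Finset.univ.filter (fun w : (Fin n → Z) × (Fin n → X) =>
          typical p ε ε' w ∧
            condNotTyp p ε ε' w.1 ≤ (2 : ℝ) ^ (-((n : ℝ) * b₀ * ε))),
        jointSeqProb p w
      ≥ 1 - (Real.exp ((n : ℝ) * chernoff1 (margFst p) ε)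
              + Real.exp ((n : ℝ) * chernoff2 (margFst p) ε)
              + (2 : ℝ) ^ (-((n : ℝ) * b₁ * ε))
              + (2 : ℝ) ^ (-((n : ℝ) * (b₁ - b₀) * ε))) := by
  set r := (2 : ℝ) ^ (-((n : ℝ) * b₀ * ε))
  have hr : 0 < r := by positivity
  have hunion := sum_not_theta_le hp (n := n) (ε := ε) (ε' := ε') (r := r)
  have hchernoff := sum_fdev_gt_le (n := n) (margFst_nonneg hp) (sum_margFst hsum) ε
  have hmarkov := (sum_fdev_le_condNotTyp_gt_le hp hr (ε := ε) (ε' := ε')).trans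
    (mul_le_mul_of_nonneg_left hhyp (inv_nonneg.mpr hr.le))
  have hexp : r⁻¹ * (2 : ℝ) ^ (-((n : ℝ) * b₁ * ε)) = (2 : ℝ) ^ (-((n : ℝ) * (b₁ - b₀) * ε)) := by
    rw [← rpow_neg zero_le_two, neg_neg, ← rpow_add zero_lt_two]
    ring_nf
  have hpartition := sum_filter_add_sum_filter_not univ
    (fun w : (Fin n → Z) × (Fin n → X) => typical p ε ε' w ∧ condNotTyp p ε ε' w.1 ≤ r)
    (jointSeqProb p)
  rw [sum_jointSeqProb hsum] at hpartition
  linarith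

/-- With `Θ = 𝟙{ (Zⁿ,Xⁿ) ∈ 𝒜_{ε,ε'}^{(n)}(Z,X) and Zⁿ ∈ ℬ_{ε,ε'}^{(n)}(Z,X) }`
(`ℬ` being the set of `zⁿ` with `ℙ[ (Zⁿ,Xⁿ) ∉ 𝒜 | Zⁿ = zⁿ ] ≤ 2^{−n b₀ ε}`), if
`ℙ[ f(Xⁿ) > ε' or f(Zⁿ,Xⁿ) > ε' ] ≤ 2^{−n b₁ ε}`, then
`ℙ[Θ = 1] ≥ 1 − ( e^{n C_Z^{(1)}(ε)} + e^{n C_Z^{(2)}(ε)} + 2^{−n b₁ ε} + 2^{−n(b₁−b₀)ε} )`. -/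
theorem prob_theta_one_bound
    {Z X : Type*} [Fintype Z] [Fintype X] (p : Z × X → ℝ)
    (hp : ∀ zx, 0 ≤ p zx) (hsum : ∑ zx, p zx = 1)
    (n : ℕ) (ε ε' b₀ b₁ : ℝ) (hε : 0 < ε) (hε' : 0 < ε') (hb₀ : 0 < b₀) (hb₁ : b₀ < b₁)
    (hhyp : ∑ w ∈ Finset.univ.filter (fun w : (Fin n → Z) × (Fin n → X) =>
          fdev (margSnd p) w.2 > ε' ∨ fdev p (pairSeq w) > ε'),
        jointSeqProb p w ≤ (2 : ℝ) ^ (-((n : ℝ) * b₁ * ε))) :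
    ∑ w ∈ Finset.univ.filter (fun w : (Fin n → Z) × (Fin n → X) =>
          typical p ε ε' w ∧
            condNotTyp p ε ε' w.1 ≤ (2 : ℝ) ^ (-((n : ℝ) * b₀ * ε))),
        jointSeqProb p w
      ≥ 1 - (Real.exp ((n : ℝ) * chernoff1 (margFst p) ε)
              + Real.exp ((n : ℝ) * chernoff2 (margFst p) ε)
              + (2 : ℝ) ^ (-((n : ℝ) * b₁ * ε))
              + (2 : ℝ) ^ (-((n : ℝ) * (b₁ - b₀) * ε))) :=
  prob_theta_one_bound_general p hp hsum n ε ε' b₀ b₁ hhyp
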